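/- arXiv:2507.13026 — 2 statements merged into one kernel-verified Lean document; each statement's English description precedes it below -/
import Mathlib

section
/- Let T1, T2 be edge-disjoint odd-depth Hamiltonian cycles on a cycle of points in S^1. Then any two distinct maximal 1-sections (maximal runs of consecutive segments of depth 1 w.r.t. both tours) are separated by at least 2 segments. -/
/-- A Hamiltonian cycle (tour) on the vertices `0,…,n-1`, given as the cyclic
sequence `q 0, q 1, …, q (n-1)` (closing back to `q 0`). -/
def IsTour (n : ℕ) (q : ℕ → ℕ) : Prop :=
  0 < n ∧ (∀ i, i < n → q i < n) ∧ (∀ i j, i < n → j < n → q i = q j → i = j)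

/-- Two tours are edge-disjoint: they share no unordered edge. -/
def ToursEdgeDisjoint (n : ℕ) (q1 q2 : ℕ → ℕ) : Prop :=
  ∀ i j, i < n → j < n →
    ¬ ((q1 i = q2 j ∧ q1 ((i + 1) % n) = q2 ((j + 1) % n)) ∨
       (q1 i = q2 ((j + 1) % n) ∧ q1 ((i + 1) % n) = q2 j))

/-- Depth of the unit segment between vertex `s` and vertex `s+1 (mod n)` with
respect to the tour `q`, where each edge `i` of the tour is realized as the
clockwise arc from `q i` to `q (i+1)` when `c i = true`, and as the opposite
arc otherwise.  The clockwise arc from `a` to `b` covers segment `s` iff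
`(s - a) % n < (b - a) % n`. -/
def tourDepth (n : ℕ) (q : ℕ → ℕ) (c : ℕ → Bool) (s : ℕ) : ℕ :=
  ((Finset.range n).filter (fun i =>
    (c i = true ∧ (s + n - q i) % n < (q ((i + 1) % n) + n - q i) % n) ∨
    (c i = false ∧ (s + n - q ((i + 1) % n)) % n < (q i + n - q ((i + 1) % n)) % n))).card

/-- Distance between points `a` and `b` among `n` evenly spaced points on a
circle of circumference `n`: the shorter arc length. -/
def arcDist (n a b : ℕ) : ℕ := min ((b + n - a) % n) ((a + n - b) % n)

/-- Cost of a tour: sum of the (shorter-arc) lengths of its edges. -/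
def tourCost (n : ℕ) (q : ℕ → ℕ) : ℕ :=
  ∑ i ∈ Finset.range n, arcDist n (q i) (q ((i + 1) % n))

/-- The arc choice `c` realizes each edge of the tour `q` by a shortest arc. -/
def ShortestChoice (n : ℕ) (q : ℕ → ℕ) (c : ℕ → Bool) : Prop :=
  ∀ i, i < n →
    (if c i then (q ((i + 1) % n) + n - q i) % n else (q i + n - q ((i + 1) % n)) % n)
      = arcDist n (q i) (q ((i + 1) % n))

namespace Stmt18Aux

/-- `x % n` for `x < 2n`. -/
lemma mod2 (n x : ℕ) (h : x < 2 * n) : x % n = if x < n then x else x - n := by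
  split_ifs with h1
  · exact Nat.mod_eq_of_lt h1
  · rw [Nat.mod_eq_sub_mod (by omega)]
    exact Nat.mod_eq_of_lt (by omega)

/-- Closed form for the circular difference. -/
lemma Dval (n a x : ℕ) (ha : a < n) (hx : x < n) :
    (x + n - a) % n = if a ≤ x then x - a else x + n - a := by
  rw [mod2 n _ (by omega)]
  split_ifs <;> omega

lemma succ_mod_eq (n i : ℕ) (hi : i < n) :
    (i + 1) % n = i + 1 ∧ i + 1 < n ∨ (i + 1) % n = 0 ∧ i + 1 = n := by
  rcases Nat.lt_or_ge (i + 1) n with h | h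
  · exact Or.inl ⟨Nat.mod_eq_of_lt h, h⟩
  · right
    have hn : i + 1 = n := by omega
    constructor
    · rw [hn, Nat.mod_self]
    · exact hn

/-- Arc starting at `t` (the boundary vertex between segments `u` and `t`)
covers segment `t` but not segment `u`. -/
lemma arith_start (n a b u t : ℕ) (hn : 1 ≤ n) (ha : a < n) (hb : b < n)
    (hu : u < n) (ht : t < n) (hut : (u + 1) % n = t) (hab : a ≠ b) (hat : a = t) :
    (t + n - a) % n < (b + n - a) % n ∧ ¬ ((u + n - a) % n < (b + n - a) % n) := by
  have h1 := succ_mod_eq n u hu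
  rw [Dval n a t ha ht, Dval n a u ha hu, Dval n a b ha hb]
  split_ifs <;> omega

/-- Arc ending at `t` covers segment `u` but not segment `t`. -/
lemma arith_end (n a b u t : ℕ) (hn : 1 ≤ n) (ha : a < n) (hb : b < n)
    (hu : u < n) (ht : t < n) (hut : (u + 1) % n = t) (hab : a ≠ b) (hbt : b = t) :
    (u + n - a) % n < (b + n - a) % n ∧ ¬ ((t + n - a) % n < (b + n - a) % n) := by
  have h1 := succ_mod_eq n u hu
  rw [Dval n a t ha ht, Dval n a u ha hu, Dval n a b ha hb]
  split_ifs <;> omega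

/-- An arc with no endpoint at `t` covers segment `u` iff it covers segment `t`. -/
lemma arith_mid (n a b u t : ℕ) (hn : 1 ≤ n) (ha : a < n) (hb : b < n)
    (hu : u < n) (ht : t < n) (hut : (u + 1) % n = t) (hat : a ≠ t) (hbt : b ≠ t) :
    ((u + n - a) % n < (b + n - a) % n ↔ (t + n - a) % n < (b + n - a) % n) := by
  have h1 := succ_mod_eq n u hu
  rw [Dval n a t ha ht, Dval n a u ha hu, Dval n a b ha hb]
  split_ifs <;> omega

end Stmt18Aux

namespace Stmt18Aux

/-- Oriented start of arc `i`. -/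
def dA (n : ℕ) (q : ℕ → ℕ) (c : ℕ → Bool) (i : ℕ) : ℕ :=
  if c i then q i else q ((i + 1) % n)

/-- Oriented end of arc `i`. -/
def dB (n : ℕ) (q : ℕ → ℕ) (c : ℕ → Bool) (i : ℕ) : ℕ :=
  if c i then q ((i + 1) % n) else q i

/-- Set of arcs covering segment `x`. -/
def covSet (n : ℕ) (q : ℕ → ℕ) (c : ℕ → Bool) (x : ℕ) : Finset ℕ :=
  (Finset.range n).filter (fun i =>
    (x + n - dA n q c i) % n < (dB n q c i + n - dA n q c i) % n)

lemma depth_eq (n : ℕ) (q : ℕ → ℕ) (c : ℕ → Bool) (x : ℕ) :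
    tourDepth n q c x = (covSet n q c x).card := by
  unfold tourDepth covSet
  congr 1
  apply Finset.filter_congr
  intro i _
  cases hc : c i <;> simp [dA, dB, hc]

lemma mem_covSet {n : ℕ} {q : ℕ → ℕ} {c : ℕ → Bool} {x i : ℕ} :
    i ∈ covSet n q c x ↔ i < n ∧
      (x + n - dA n q c i) % n < (dB n q c i + n - dA n q c i) % n := by
  simp [covSet]

lemma dAB_lt (n : ℕ) (q : ℕ → ℕ) (c : ℕ → Bool) (hT : IsTour n q) (i : ℕ) (hi : i < n) :
    dA n q c i < n ∧ dB n q c i < n := by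
  have h1 := hT.2.1 i hi
  have h2 := hT.2.1 ((i + 1) % n) (Nat.mod_lt _ hT.1)
  cases hc : c i <;> simp [dA, dB, hc] <;> omega

lemma dA_ne_dB (n : ℕ) (q : ℕ → ℕ) (c : ℕ → Bool) (hT : IsTour n q) (hn : 2 ≤ n)
    (i : ℕ) (hi : i < n) : dA n q c i ≠ dB n q c i := by
  have hi1 : (i + 1) % n < n := Nat.mod_lt _ hT.1
  have hne : i ≠ (i + 1) % n := by
    have := succ_mod_eq n i hi
    omega
  have hq : q i ≠ q ((i + 1) % n) := fun h => hne (hT.2.2 i _ hi hi1 h)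
  cases hc : c i <;> simp [dA, dB, hc]
  · exact fun h => hq h.symm
  · exact hq

lemma edge_pair (n : ℕ) (q : ℕ → ℕ) (c : ℕ → Bool) (i : ℕ) :
    (dA n q c i = q i ∧ dB n q c i = q ((i + 1) % n)) ∨
    (dA n q c i = q ((i + 1) % n) ∧ dB n q c i = q i) := by
  cases hc : c i <;> simp [dA, dB, hc]

lemma uniq_arc (n : ℕ) (q : ℕ → ℕ) (c : ℕ → Bool) (hT : IsTour n q) (hn : 3 ≤ n)
    {i j v w : ℕ} (hi : i < n) (hj : j < n)
    (h1 : dA n q c i = v) (h2 : dB n q c i = w)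
    (h3 : dA n q c j = v) (h4 : dB n q c j = w) : i = j := by
  have hi1 : (i + 1) % n < n := Nat.mod_lt _ hT.1
  have hj1 : (j + 1) % n < n := Nat.mod_lt _ hT.1
  have hmi := succ_mod_eq n i hi
  have hmj := succ_mod_eq n j hj
  have inj := hT.2.2
  cases hci : c i <;> cases hcj : c j <;> simp [dA, dB, hci, hcj] at h1 h2 h3 h4
  · -- c i = false, c j = false : q ((i+1)%n) = v etc.
    exact inj i j hi hj (h2.trans h4.symm)
  · -- c i = false, c j = true : q((i+1)%n)=v, q i = w, q j = v, q((j+1)%n)=w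
    have e1 : i = (j + 1) % n := inj i _ hi hj1 (h2.trans h4.symm)
    have e2 : (i + 1) % n = j := inj _ j hi1 hj (h1.trans h3.symm)
    omega
  · -- c i = true, c j = false
    have e1 : (i + 1) % n = j := inj _ j hi1 hj (h2.trans h4.symm)
    have e2 : i = (j + 1) % n := inj i _ hi hj1 (h1.trans h3.symm)
    omega
  · exact inj i j hi hj (h1.trans h3.symm)

end Stmt18Aux

namespace Stmt18Aux

lemma key (n : ℕ) (q : ℕ → ℕ) (c : ℕ → Bool) (s : ℕ) (hn : 3 ≤ n) (hT : IsTour n q)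
    (hs : s < n) (h0 : tourDepth n q c s = 1) (h2 : tourDepth n q c ((s + 2) % n) = 1)
    (hodd : Odd (tourDepth n q c ((s + 1) % n))) (hne : tourDepth n q c ((s + 1) % n) ≠ 1) :
    ∃ i, i < n ∧ ((q i = (s + 1) % n ∧ q ((i + 1) % n) = (s + 2) % n) ∨
                  (q i = (s + 2) % n ∧ q ((i + 1) % n) = (s + 1) % n)) := by
  have hn0 : 0 < n := by omega
  set v := (s + 1) % n with hv
  set w := (s + 2) % n with hw
  have hvn : v < n := Nat.mod_lt _ hn0
  have hwn : w < n := Nat.mod_lt _ hn0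
  have hsv : (s + 1) % n = v := rfl
  have hvw : (v + 1) % n = w := by rw [hv, hw, Nat.mod_add_mod]
  rw [depth_eq] at h0 h2 hne hodd
  have hd3 : 3 ≤ (covSet n q c v).card := by
    obtain ⟨k, hk⟩ := hodd; omega
  have hsub : 1 ≤ ((covSet n q c v \ covSet n q c s) \ covSet n q c w).card := by
    have e1 := Finset.card_inter_add_card_sdiff (covSet n q c v) (covSet n q c s)
    have e2 := Finset.card_inter_add_card_sdiff (covSet n q c v \ covSet n q c s)
      (covSet n q c w)
    have l1 : (covSet n q c v ∩ covSet n q c s).card ≤ 1 :=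
      h0 ▸ Finset.card_le_card Finset.inter_subset_right
    have l2 : ((covSet n q c v \ covSet n q c s) ∩ covSet n q c w).card ≤ 1 :=
      h2 ▸ Finset.card_le_card Finset.inter_subset_right
    omega
  obtain ⟨i, hi⟩ := Finset.card_pos.mp hsub
  rw [Finset.mem_sdiff, Finset.mem_sdiff] at hi
  obtain ⟨⟨hiv, his⟩, hiw⟩ := hi
  rw [mem_covSet] at hiv
  obtain ⟨hin, hcov⟩ := hiv
  have hnis : ¬ ((s + n - dA n q c i) % n < (dB n q c i + n - dA n q c i) % n) :=
    fun h => his (mem_covSet.mpr ⟨hin, h⟩)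
  have hniw : ¬ ((w + n - dA n q c i) % n < (dB n q c i + n - dA n q c i) % n) :=
    fun h => hiw (mem_covSet.mpr ⟨hin, h⟩)
  obtain ⟨hAlt, hBlt⟩ := dAB_lt n q c hT i hin
  have hAB := dA_ne_dB n q c hT (by omega) i hin
  have hAv : dA n q c i = v := by
    by_contra hAv
    by_cases hBv : dB n q c i = v
    · exact (arith_end n _ _ s v hn0 hAlt hBlt hs hvn hsv hAB hBv).2 hcov
    · exact hnis ((arith_mid n _ _ s v hn0 hAlt hBlt hs hvn hsv hAv hBv).mpr hcov)
  have hBw : dB n q c i = w := by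
    by_contra hBw
    by_cases hAw : dA n q c i = w
    · exact (arith_start n _ _ v w hn0 hAlt hBlt hvn hwn hvw hAB hAw).2 hcov
    · exact hniw ((arith_mid n _ _ v w hn0 hAlt hBlt hvn hwn hvw hAw hBw).mp hcov)
  rcases edge_pair n q c i with ⟨e1, e2⟩ | ⟨e1, e2⟩
  · exact ⟨i, hin, Or.inl ⟨e1.symm.trans hAv, e2.symm.trans hBw⟩⟩
  · exact ⟨i, hin, Or.inr ⟨e2.symm.trans hBw, e1.symm.trans hAv⟩⟩

end Stmt18Aux

namespace Stmt18Aux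

lemma key2 (n : ℕ) (q : ℕ → ℕ) (c : ℕ → Bool) (s : ℕ) (hn : 3 ≤ n) (hT : IsTour n q)
    (hs : s < n) (h0 : tourDepth n q c s = 1) (h1 : tourDepth n q c ((s + 1) % n) = 1)
    (h2 : tourDepth n q c ((s + 2) % n) = 1)
    (hno : ∀ i, i < n → ¬ ((q i = (s + 1) % n ∧ q ((i + 1) % n) = (s + 2) % n) ∨
                           (q i = (s + 2) % n ∧ q ((i + 1) % n) = (s + 1) % n))) : False := by
  have hn0 : 0 < n := by omega
  set v := (s + 1) % n with hv
  set w := (s + 2) % n with hw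
  have hvn : v < n := Nat.mod_lt _ hn0
  have hwn : w < n := Nat.mod_lt _ hn0
  have hsv : (s + 1) % n = v := rfl
  have hvw : (v + 1) % n = w := by rw [hv, hw, Nat.mod_add_mod]
  rw [depth_eq] at h0 h1 h2
  -- surjectivity
  have hqinj : Set.InjOn q (Finset.range n) := fun x hx y hy hxy =>
    hT.2.2 x y (Finset.mem_range.mp hx) (Finset.mem_range.mp hy) hxy
  have himg : (Finset.range n).image q = Finset.range n := by
    apply Finset.eq_of_subset_of_card_le
    · intro x hx
      obtain ⟨y, hy, rfl⟩ := Finset.mem_image.mp hx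
      exact Finset.mem_range.mpr (hT.2.1 y (Finset.mem_range.mp hy))
    · rw [Finset.card_image_of_injOn hqinj]
  have hsurj : ∀ t, t < n → ∃ k, k < n ∧ q k = t := by
    intro t ht
    have : t ∈ (Finset.range n).image q := by rw [himg]; exact Finset.mem_range.mpr ht
    obtain ⟨k, hk, hqk⟩ := Finset.mem_image.mp this
    exact ⟨k, Finset.mem_range.mp hk, hqk⟩
  -- the two edges incident to a vertex t
  have hpred : ∀ k, k < n → ((k + n - 1) % n + 1) % n = k ∧ (k + n - 1) % n ≠ k := by
    intro k hk
    have hlt : (k + n - 1) % n < n := Nat.mod_lt _ hn0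
    have heq : ((k + n - 1) % n + 1) % n = k := by
      rw [Nat.mod_add_mod]
      have : k + n - 1 + 1 = k + n := by omega
      rw [this, Nat.add_mod_right]
      exact Nat.mod_eq_of_lt hk
    refine ⟨heq, fun h => ?_⟩
    rw [h] at heq
    have := succ_mod_eq n k hk
    omega
  -- classification of arcs with an endpoint at the boundary vertex t
  -- between segments u (before) and t (after)
  have hclass : ∀ u t α, u < n → t < n → (u + 1) % n = t → α < n →
      (dA n q c α = t ∨ dB n q c α = t) →
      (dA n q c α = t ∧ α ∈ covSet n q c t ∧ α ∉ covSet n q c u) ∨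
      (dB n q c α = t ∧ α ∈ covSet n q c u ∧ α ∉ covSet n q c t) := by
    intro u t α hu ht hut hα hend
    obtain ⟨hAl, hBl⟩ := dAB_lt n q c hT α hα
    have hAB := dA_ne_dB n q c hT (by omega) α hα
    rcases hend with hA | hB
    · left
      have := arith_start n _ _ u t hn0 hAl hBl hu ht hut hAB hA
      exact ⟨hA, mem_covSet.mpr ⟨hα, this.1⟩, fun hm => this.2 (mem_covSet.mp hm).2⟩
    · right
      have := arith_end n _ _ u t hn0 hAl hBl hu ht hut hAB hB
      exact ⟨hB, mem_covSet.mpr ⟨hα, this.1⟩, fun hm => this.2 (mem_covSet.mp hm).2⟩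
  -- cardinality helper
  have hcard : ∀ (S : Finset ℕ) (a b : ℕ), S.card = 1 → a ∈ S → b ∈ S → a ≠ b → False := by
    intro S a b hS ha hb hab
    have hsub : ({a, b} : Finset ℕ) ⊆ S := by
      intro x hx
      rcases Finset.mem_insert.mp hx with rfl | hx
      · exact ha
      · rw [Finset.mem_singleton.mp hx]; exact hb
    have := Finset.card_le_card hsub
    rw [Finset.card_pair hab] at this
    omega
  -- endpoint dichotomy
  have hend : ∀ k, k < n → q k = v → dA n q c k = v ∨ dB n q c k = v := by
    intro k hk hqk
    cases hc : c k
    · exact Or.inr (by simp [dB, hc, hqk])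
    · exact Or.inl (by simp [dA, hc, hqk])
  have hend' : ∀ k, k < n → q ((k + 1) % n) = v → dA n q c k = v ∨ dB n q c k = v := by
    intro k hk hqk
    cases hc : c k
    · exact Or.inl (by simp [dA, hc, hqk])
    · exact Or.inr (by simp [dB, hc, hqk])
  have hendw : ∀ k, k < n → q k = w → dA n q c k = w ∨ dB n q c k = w := by
    intro k hk hqk
    cases hc : c k
    · exact Or.inr (by simp [dB, hc, hqk])
    · exact Or.inl (by simp [dA, hc, hqk])
  have hendw' : ∀ k, k < n → q ((k + 1) % n) = w → dA n q c k = w ∨ dB n q c k = w := by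
    intro k hk hqk
    cases hc : c k
    · exact Or.inl (by simp [dA, hc, hqk])
    · exact Or.inr (by simp [dB, hc, hqk])
  -- find α : arc starting at v, covering segment v
  obtain ⟨k, hk, hqk⟩ := hsurj v hvn
  obtain ⟨hk'succ, hk'ne⟩ := hpred k hk
  set k' := (k + n - 1) % n with hk'
  have hk'lt : k' < n := Nat.mod_lt _ hn0
  have hqk' : q ((k' + 1) % n) = v := by rw [hk'succ]; exact hqk
  have hck := hclass s v k hs hvn hsv hk (hend k hk hqk)
  have hck' := hclass s v k' hs hvn hsv hk'lt (hend' k' hk'lt hqk')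
  have hα : ∃ α, α < n ∧ dA n q c α = v ∧ α ∈ covSet n q c v := by
    rcases hck with ⟨hA, hm, _⟩ | ⟨_, hm, _⟩
    · exact ⟨k, hk, hA, hm⟩
    · rcases hck' with ⟨hA', hm', _⟩ | ⟨_, hm', _⟩
      · exact ⟨k', hk'lt, hA', hm'⟩
      · exact (hcard _ k k' h0 hm hm' (Ne.symm hk'ne)).elim
  obtain ⟨α, hαlt, hαA, hαmem⟩ := hα
  -- find β : arc ending at w, covering segment v but not w
  obtain ⟨m, hm, hqm⟩ := hsurj w hwn
  obtain ⟨hm'succ, hm'ne⟩ := hpred m hm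
  set m' := (m + n - 1) % n with hm'
  have hm'lt : m' < n := Nat.mod_lt _ hn0
  have hqm' : q ((m' + 1) % n) = w := by rw [hm'succ]; exact hqm
  have hcm := hclass v w m hvn hwn hvw hm (hendw m hm hqm)
  have hcm' := hclass v w m' hvn hwn hvw hm'lt (hendw' m' hm'lt hqm')
  have hβ : ∃ β, β < n ∧ dB n q c β = w ∧ β ∈ covSet n q c v ∧ β ∉ covSet n q c w := by
    rcases hcm with ⟨_, hmm, _⟩ | ⟨hB, hmm, hnm⟩
    · rcases hcm' with ⟨_, hmm', _⟩ | ⟨hB', hmm', hnm'⟩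
      · exact (hcard _ m m' h2 hmm hmm' (Ne.symm hm'ne)).elim
      · exact ⟨m', hm'lt, hB', hmm', hnm'⟩
    · exact ⟨m, hm, hB, hmm, hnm⟩
  obtain ⟨β, hβlt, hβB, hβmem, _⟩ := hβ
  -- α ≠ β, else the tour contains the unit edge {v, w}
  have hαβ : α ≠ β := by
    intro h
    subst h
    apply hno α hαlt
    rcases edge_pair n q c α with ⟨e1, e2⟩ | ⟨e1, e2⟩
    · exact Or.inl ⟨e1.symm.trans hαA, e2.symm.trans hβB⟩
    · exact Or.inr ⟨e2.symm.trans hβB, e1.symm.trans hαA⟩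
  exact hcard _ α β h1 hαmem hβmem hαβ

end Stmt18Aux

namespace Stmt18Aux

lemma edge_clash {a b e f v w : ℕ}
    (h1 : (a = v ∧ b = w) ∨ (a = w ∧ b = v))
    (h2 : (e = v ∧ f = w) ∨ (e = w ∧ f = v)) :
    (a = e ∧ b = f) ∨ (a = f ∧ b = e) := by
  rcases h1 with ⟨h1a, h1b⟩ | ⟨h1a, h1b⟩ <;> rcases h2 with ⟨h2a, h2b⟩ | ⟨h2a, h2b⟩ <;> omega

end Stmt18Aux

open Stmt18Aux

/-- for edge-disjoint odd-depth tours, two distinct maximal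
1-sections are separated by at least 2 segments: there is no segment outside a
1-section with segments of 1-sections immediately on both sides. -/
theorem stmt_18 (n : ℕ) (q1 q2 : ℕ → ℕ) (c1 c2 : ℕ → Bool)
    (h1 : IsTour n q1) (h2 : IsTour n q2)
    (hd : ToursEdgeDisjoint n q1 q2)
    (hodd1 : ∀ s, s < n → Odd (tourDepth n q1 c1 s))
    (hodd2 : ∀ s, s < n → Odd (tourDepth n q2 c2 s)) :
    ∀ s, s < n →
      ¬ ((tourDepth n q1 c1 s = 1 ∧ tourDepth n q2 c2 s = 1) ∧
         ¬ (tourDepth n q1 c1 ((s + 1) % n) = 1 ∧ tourDepth n q2 c2 ((s + 1) % n) = 1) ∧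
         (tourDepth n q1 c1 ((s + 2) % n) = 1 ∧ tourDepth n q2 c2 ((s + 2) % n) = 1)) := by
  intro s hs hcon
  obtain ⟨⟨d1s, d2s⟩, hmid, d1w, d2w⟩ := hcon
  have hn0 : 0 < n := h1.1
  have hn3 : 3 ≤ n := by
    by_contra hlt
    interval_cases n
    · -- n = 1
      have ho := hodd1 0 (by omega)
      have hz : tourDepth 1 q1 c1 0 = 0 := by
        simp [tourDepth, Nat.mod_one]
      rw [hz] at ho
      simp [Nat.odd_iff] at ho
    · -- n = 2
      have hq10 := h1.2.1 0 (by omega)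
      have hq11 := h1.2.1 1 (by omega)
      have hq20 := h2.2.1 0 (by omega)
      have hq21 := h2.2.1 1 (by omega)
      have hne1 : q1 0 ≠ q1 1 := fun h => by have := h1.2.2 0 1 (by omega) (by omega) h; omega
      have hne2 : q2 0 ≠ q2 1 := fun h => by have := h2.2.2 0 1 (by omega) (by omega) h; omega
      have hdd := hd 0 0 (by omega) (by omega)
      norm_num at hdd
      omega
  have hvlt : (s + 1) % n < n := Nat.mod_lt _ hn0
  by_cases hc1 : tourDepth n q1 c1 ((s + 1) % n) = 1
  · have hc2 : tourDepth n q2 c2 ((s + 1) % n) ≠ 1 := fun h => hmid ⟨hc1, h⟩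
    obtain ⟨j, hj, horj⟩ := key n q2 c2 s hn3 h2 hs d2s d2w (hodd2 _ hvlt) hc2
    exact key2 n q1 c1 s hn3 h1 hs d1s hc1 d1w (fun i hi hcontra =>
      hd i j hi hj (edge_clash hcontra horj))
  · obtain ⟨i, hi, hori⟩ := key n q1 c1 s hn3 h1 hs d1s d1w (hodd1 _ hvlt) hc1
    by_cases hc2 : tourDepth n q2 c2 ((s + 1) % n) = 1
    · exact key2 n q2 c2 s hn3 h2 hs d2s hc2 d2w (fun j hj hcontra =>
        hd i j hi hj (edge_clash hori hcontra))
    · obtain ⟨j, hj, horj⟩ := key n q2 c2 s hn3 h2 hs d2s d2w (hodd2 _ hvlt) hc2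
      exact hd i j hi hj (edge_clash hori horj)
end

section
/- Let n ≥ 5 be odd and let v_1,...,v_n be the vertices of an optimal Hamiltonian cycle H in a metric space, taken in cycle order. Then the cycles T1 = (v_1, v_2, ..., v_n, v_1) and T2 = (v_1, v_3, v_5, ..., v_n, v_2, v_4, ..., v_{n−1}, v_1) are edge-disjoint Hamiltonian cycles, c(T1) = c(H), and c(T2) ≤ 2·c(H); in particular max(c(T1), c(T2)) ≤ 2·c(H). -/
/-- cyclic shift does not change a sum over `range n` -/
lemma sum_shift_aux (n : ℕ) (f : ℕ → ℝ) :
    ∑ k ∈ Finset.range n, f ((k + 1) % n) = ∑ k ∈ Finset.range n, f k := by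
  rcases n with _ | n'
  · simp
  · rw [Finset.sum_range_succ, Finset.sum_range_succ', Nat.mod_self]
    congr 1
    refine Finset.sum_congr rfl fun k hk => ?_
    rw [Nat.mod_eq_of_lt (by simp only [Finset.mem_range] at hk; omega)]

/-- charging lemma: if each `D j` is bounded by two consecutive `E`-edges
pointed to by an injective map `r`, then `∑ D ≤ 2 ∑ E`. -/
lemma sum_charge_aux (n : ℕ) (E D : ℕ → ℝ) (hE : ∀ k, 0 ≤ E k) (r : ℕ → ℕ)
    (hrlt : ∀ j, j < n → r j < n)
    (hrinj : ∀ i ∈ Finset.range n, ∀ j ∈ Finset.range n, r i = r j → i = j)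
    (hkey : ∀ j ∈ Finset.range n, D j ≤ E (r j) + E ((r j + 1) % n)) :
    ∑ j ∈ Finset.range n, D j ≤ 2 * ∑ j ∈ Finset.range n, E j := by
  calc ∑ j ∈ Finset.range n, D j
      ≤ ∑ j ∈ Finset.range n, (E (r j) + E ((r j + 1) % n)) := Finset.sum_le_sum hkey
    _ = ∑ k ∈ (Finset.range n).image r, (E k + E ((k + 1) % n)) := by
        rw [Finset.sum_image (f := fun k => E k + E ((k + 1) % n)) hrinj]
    _ ≤ ∑ k ∈ Finset.range n, (E k + E ((k + 1) % n)) := by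
        apply Finset.sum_le_sum_of_subset_of_nonneg
        · intro k hk
          simp only [Finset.mem_image, Finset.mem_range] at hk ⊢
          obtain ⟨j, hj, rfl⟩ := hk
          exact hrlt j hj
        · intro k _ _
          exact add_nonneg (hE k) (hE _)
    _ = (∑ k ∈ Finset.range n, E k) + ∑ k ∈ Finset.range n, E ((k + 1) % n) :=
        Finset.sum_add_distrib
    _ = 2 * ∑ k ∈ Finset.range n, E k := by rw [sum_shift_aux]; ring

def tourR (n p : ℕ) (j : ℕ) : ℕ :=
  if j < p then 2 * j else if j = p then n - 1 else if j + 1 < n then 2 * (j - p) - 1 else n - 2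

lemma tourR_lt (n p : ℕ) (hn : n = 2 * p + 1) (hp : 2 ≤ p) (j : ℕ) (hj : j < n) :
    tourR n p j < n := by
  unfold tourR; split_ifs <;> omega

lemma tourR_injOn (n p : ℕ) (hn : n = 2 * p + 1) (hp : 2 ≤ p) :
    ∀ i ∈ Finset.range n, ∀ j ∈ Finset.range n, tourR n p i = tourR n p j → i = j := by
  intro i hi j hj h
  simp only [Finset.mem_range] at hi hj
  unfold tourR at h
  split_ifs at h <;> omega

/-- for odd `n ≥ 5` and an optimal Hamiltonian cycle
`H = (x 1, …, x n, x 1)` in a metric space, the tours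
`T1 = H` and `T2 = (x 1, x 3, …, x n, x 2, x 4, …, x (n-1), x 1)` are
edge-disjoint Hamiltonian cycles with `c(T1) = c(H)` and `c(T2) ≤ 2 c(H)`;
in particular `max (c T1) (c T2) ≤ 2 c(H)`. -/
theorem stmt_19 {X : Type*} [MetricSpace X] (n : ℕ) (hn : 5 ≤ n) (hodd : Odd n)
    (x : ℕ → X)
    (hinj : ∀ i j, 1 ≤ i → i ≤ n → 1 ≤ j → j ≤ n → x i = x j → i = j)
    (t1 t2 : ℕ → ℕ)
    (ht1 : ∀ j, t1 j = j % n + 1)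
    (ht2 : ∀ j, t2 j = if j % n < (n + 1) / 2 then 2 * (j % n) + 1
                       else 2 * (j % n - (n + 1) / 2) + 2)
    (hopt : ∀ q : ℕ → ℕ, (∀ i, i < n → 1 ≤ q i ∧ q i ≤ n) →
      (∀ i j, i < n → j < n → q i = q j → i = j) →
      ∑ j ∈ Finset.range n, dist (x (t1 j)) (x (t1 ((j + 1) % n))) ≤
        ∑ j ∈ Finset.range n, dist (x (q j)) (x (q ((j + 1) % n)))) :
    (∀ i j, i < n → j < n →
      ¬ ((t1 i = t2 j ∧ t1 ((i + 1) % n) = t2 ((j + 1) % n)) ∨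
         (t1 i = t2 ((j + 1) % n) ∧ t1 ((i + 1) % n) = t2 j))) ∧
    (∑ j ∈ Finset.range n, dist (x (t1 j)) (x (t1 ((j + 1) % n))) =
      ∑ j ∈ Finset.range n, dist (x (j % n + 1)) (x ((j + 1) % n + 1))) ∧
    (∑ j ∈ Finset.range n, dist (x (t2 j)) (x (t2 ((j + 1) % n))) ≤
      2 * ∑ j ∈ Finset.range n, dist (x (t1 j)) (x (t1 ((j + 1) % n)))) ∧
    max (∑ j ∈ Finset.range n, dist (x (t1 j)) (x (t1 ((j + 1) % n))))
        (∑ j ∈ Finset.range n, dist (x (t2 j)) (x (t2 ((j + 1) % n)))) ≤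
      2 * ∑ j ∈ Finset.range n, dist (x (t1 j)) (x (t1 ((j + 1) % n))) := by
  obtain ⟨p, hp⟩ := hodd
  have hp2 : 2 ≤ p := by omega
  rw [show (n + 1) / 2 = p + 1 from by omega] at ht2
  -- evaluation of T1 edges
  have EVA : ∀ k, k + 1 < n →
      dist (x (t1 k)) (x (t1 ((k + 1) % n))) = dist (x (k + 1)) (x (k + 2)) := by
    intro k hk
    rw [ht1, ht1, Nat.mod_eq_of_lt (show k < n by omega), Nat.mod_eq_of_lt hk,
      Nat.mod_eq_of_lt hk, show k + 1 + 1 = k + 2 from by omega]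
  have EVB : dist (x (t1 (n - 1))) (x (t1 ((n - 1 + 1) % n))) = dist (x n) (x 1) := by
    rw [show n - 1 + 1 = n from by omega, Nat.mod_self, ht1, ht1,
      Nat.mod_eq_of_lt (show n - 1 < n by omega), Nat.zero_mod,
      show n - 1 + 1 = n from by omega]
  -- Part 3
  have h3 : ∑ j ∈ Finset.range n, dist (x (t2 j)) (x (t2 ((j + 1) % n))) ≤
      2 * ∑ j ∈ Finset.range n, dist (x (t1 j)) (x (t1 ((j + 1) % n))) := by
    refine sum_charge_aux n (fun k => dist (x (t1 k)) (x (t1 ((k + 1) % n))))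
      (fun j => dist (x (t2 j)) (x (t2 ((j + 1) % n)))) (fun k => dist_nonneg)
      (tourR n p) (tourR_lt n p hp hp2) (tourR_injOn n p hp hp2) ?_
    intro j hj
    simp only [Finset.mem_range] at hj
    by_cases c1 : j < p
    · -- interior odd edge
      have r1 : tourR n p j = 2 * j := by unfold tourR; rw [if_pos c1]
      have v1 : t2 j = 2 * j + 1 := by
        rw [ht2, Nat.mod_eq_of_lt (show j < n by omega), if_pos (show j < p + 1 by omega)]
      have v2 : t2 ((j + 1) % n) = 2 * j + 3 := by
        rw [Nat.mod_eq_of_lt (show j + 1 < n by omega), ht2,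
          Nat.mod_eq_of_lt (show j + 1 < n by omega),
          if_pos (show j + 1 < p + 1 by omega)]
        omega
      rw [r1, EVA (2 * j) (by omega),
        Nat.mod_eq_of_lt (show 2 * j + 1 < n by omega),
        EVA (2 * j + 1) (by omega), v1, v2,
        show 2 * j + 1 + 1 = 2 * j + 2 from by omega,
        show 2 * j + 1 + 2 = 2 * j + 3 from by omega]
      exact dist_triangle _ _ _
    · by_cases c2 : j = p
      · -- the edge (n, 2)
        have r2 : tourR n p j = n - 1 := by
          unfold tourR; rw [if_neg c1, if_pos c2]
        have v1 : t2 j = n := by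
          rw [ht2, Nat.mod_eq_of_lt (show j < n by omega), if_pos (show j < p + 1 by omega)]
          omega
        have v2 : t2 ((j + 1) % n) = 2 := by
          rw [Nat.mod_eq_of_lt (show j + 1 < n by omega), ht2,
            Nat.mod_eq_of_lt (show j + 1 < n by omega), if_neg (by omega)]
          omega
        rw [r2, EVB, show n - 1 + 1 = n from by omega, Nat.mod_self,
          EVA 0 (by omega), v1, v2, show (0 : ℕ) + 1 = 1 from by omega,
          show (0 : ℕ) + 2 = 2 from by omega]
        exact dist_triangle _ _ _
      · by_cases c3 : j + 1 < n
        · -- interior even edge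
          have r3 : tourR n p j = 2 * (j - p) - 1 := by
            unfold tourR; rw [if_neg c1, if_neg c2, if_pos c3]
          have v1 : t2 j = 2 * (j - p) := by
            rw [ht2, Nat.mod_eq_of_lt (show j < n by omega), if_neg (by omega)]
            omega
          have v2 : t2 ((j + 1) % n) = 2 * (j - p) + 2 := by
            rw [Nat.mod_eq_of_lt c3, ht2, Nat.mod_eq_of_lt c3, if_neg (by omega)]
            omega
          rw [r3, EVA (2 * (j - p) - 1) (by omega),
            Nat.mod_eq_of_lt (show 2 * (j - p) - 1 + 1 < n by omega),
            EVA (2 * (j - p) - 1 + 1) (by omega), v1, v2,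
            show 2 * (j - p) - 1 + 1 = 2 * (j - p) from by omega,
            show 2 * (j - p) - 1 + 2 = 2 * (j - p) + 1 from by omega,
            show 2 * (j - p) + 2 = 2 * (j - p) + 2 from rfl]
          have := dist_triangle (x (2 * (j - p))) (x (2 * (j - p) + 1)) (x (2 * (j - p) + 2))
          convert this using 3 <;> omega
        · -- last edge (n-1, 1)
          have r4 : tourR n p j = n - 2 := by
            unfold tourR; rw [if_neg c1, if_neg c2, if_neg c3]
          have v1 : t2 j = n - 1 := by
            rw [ht2, Nat.mod_eq_of_lt (show j < n by omega), if_neg (by omega)]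
            omega
          have v2 : t2 ((j + 1) % n) = 1 := by
            rw [show j + 1 = n from by omega, Nat.mod_self, ht2, Nat.zero_mod,
              if_pos (by omega)]
          rw [r4, EVA (n - 2) (by omega), show n - 2 + 1 = n - 1 from by omega,
            Nat.mod_eq_of_lt (show n - 1 < n by omega), EVB, v1, v2,
            show n - 2 + 2 = n from by omega]
          exact dist_triangle _ _ _
  refine ⟨?_, ?_, h3, ?_⟩
  · -- edge disjointness
    intro i j hi hj h
    simp only [ht1, ht2] at h
    simp only [Nat.mod_eq_of_lt hi, Nat.mod_eq_of_lt hj] at h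
    rcases Nat.lt_or_ge (i + 1) n with h1 | h1
    · simp only [Nat.mod_eq_of_lt h1] at h
      rcases Nat.lt_or_ge (j + 1) n with h2 | h2
      · simp only [Nat.mod_eq_of_lt h2] at h
        split_ifs at h <;> omega
      · have e2 : (j + 1) % n = 0 := by rw [show j + 1 = n from by omega]; exact Nat.mod_self n
        simp only [e2, Nat.zero_mod] at h
        split_ifs at h <;> omega
    · have e1 : (i + 1) % n = 0 := by rw [show i + 1 = n from by omega]; exact Nat.mod_self n
      simp only [e1, Nat.zero_mod] at h
      rcases Nat.lt_or_ge (j + 1) n with h2 | h2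
      · simp only [Nat.mod_eq_of_lt h2] at h
        split_ifs at h <;> omega
      · have e2 : (j + 1) % n = 0 := by rw [show j + 1 = n from by omega]; exact Nat.mod_self n
        simp only [e2, Nat.zero_mod] at h
        split_ifs at h <;> omega
  · -- c(T1) = c(H)
    refine Finset.sum_congr rfl fun j hj => ?_
    rw [ht1, ht1, Nat.mod_mod_of_dvd (j + 1) dvd_rfl]
  · -- max bound
    have hS : 0 ≤ ∑ j ∈ Finset.range n, dist (x (t1 j)) (x (t1 ((j + 1) % n))) :=
      Finset.sum_nonneg fun _ _ => dist_nonneg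
    exact max_le (by linarith) h3
end
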